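/- arXiv:2008.03182 — 3 statements merged into one kernel-verified Lean document; each statement's English description precedes it below -/
import Mathlib

section
/- If L is a symmetric positive semidefinite matrix (a graph Laplacian) with eigenvalue λ, then the block matrix L^{αβ} = [[L + I, -I], [-I, I]] has eigenvalues (λ + 2 ± √(λ² + 4))/2. In particular, for every eigenvalue λ of L, both (λ + 2 + √(λ²+4))/2 and (λ + 2 - √(λ²+4))/2 are eigenvalues of L^{αβ}. -/
open Matrix

lemma helper0 {n : ℕ} (L : Matrix (Fin n) (Fin n) ℝ) (lam : ℝ)
    (v : Fin n → ℝ) (hv : v ≠ 0) (hLv : L.mulVec v = lam • v)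
    (c μ : ℝ) (h1 : lam + 1 - c = μ) (h2 : -1 + c = μ * c) :
    ∃ w : (Fin n ⊕ Fin n) → ℝ, w ≠ 0 ∧
      (Matrix.fromBlocks (L + 1) (-1) (-1) 1).mulVec w = μ • w := by
  refine ⟨Sum.elim v (c • v), ?_, ?_⟩
  · intro h
    apply hv
    funext i
    exact congrFun h (Sum.inl i)
  · rw [Matrix.fromBlocks_mulVec]
    funext i
    cases i with
    | inl i =>
      simp [Matrix.add_mulVec, hLv, Matrix.neg_mulVec, Matrix.mulVec_smul,
        Pi.smul_apply, smul_eq_mul]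
      linear_combination (v i) * h1
    | inr i =>
      simp [Matrix.neg_mulVec, Matrix.mulVec_smul, Pi.smul_apply, smul_eq_mul]
      linear_combination (v i) * h2

theorem stmt0 {n : ℕ} (L : Matrix (Fin n) (Fin n) ℝ)
    (hSymm : L.IsSymm) (hPSD : L.PosSemidef) (lam : ℝ)
    (hEig : ∃ v : Fin n → ℝ, v ≠ 0 ∧ L.mulVec v = lam • v) :
    (∃ w : (Fin n ⊕ Fin n) → ℝ, w ≠ 0 ∧
      (Matrix.fromBlocks (L + 1) (-1) (-1) 1).mulVec w =
        ((lam + 2 + Real.sqrt (lam ^ 2 + 4)) / 2) • w) ∧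
    (∃ w : (Fin n ⊕ Fin n) → ℝ, w ≠ 0 ∧
      (Matrix.fromBlocks (L + 1) (-1) (-1) 1).mulVec w =
        ((lam + 2 - Real.sqrt (lam ^ 2 + 4)) / 2) • w) := by
  obtain ⟨v, hv, hLv⟩ := hEig
  have hs : Real.sqrt (lam ^ 2 + 4) ^ 2 = lam ^ 2 + 4 :=
    Real.sq_sqrt (by positivity)
  set s := Real.sqrt (lam ^ 2 + 4) with hsdef
  constructor
  · exact helper0 L lam v hv hLv ((lam - s) / 2) _ (by ring) (by nlinarith)
  · exact helper0 L lam v hv hLv ((lam + s) / 2) _ (by ring) (by nlinarith)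
end

section
/- (Privacy by indistinguishability, algebraic core) Let x^α, x^β solve the decomposed consensus dynamics with data (r^α(0), r^β(0), f^α, f^β) and let p be an agent with a neighbor l. For any alternative reference r̄_p(t) ≠ r_p(t), define modified data by equations: r̄^α_p(0)=r^α_p(0), r̄^β_p(0)=2r̄_p(0)−r^α_p(0), r̄^α_l(0)=r^α_l(0), r̄^β_l(0)=2r̄_l(0)−r^α_l(0) with r̄_l(0)=r_l(0)+r_p(0)−r̄_p(0), f̄^α_p(t)=f^α_p(t)+2κ(r_p(t)−r̄_p(t)), f̄^β_p(t)=2f̄_p(t)−f̄^α_p(t), f̄^α_l(t)=f^α_l(t)+2κ(r̄_p(t)−r_p(t)), f̄^β_l(t)=2f̄_l(t)−f̄^α_l(t), and all other data unchanged. Then the functions x̄^α_i(t)=x^α_i(t) for all i, x̄^β_p(t)=x^β_p(t)+2(r̄_p(t)−r_p(t)), x̄^β_l(t)=x^β_l(t)+2(r_p(t)−r̄_p(t)), and x̄^β_q(t)=x^β_q(t) for q ∉ {p,l}, solve the decomposed consensus dynamics with the modified data. In particular the externally visible trajectories x̄^α_i coincide with x^α_i. -/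
theorem stmt9 {n m : ℕ}
    (xA xB : Fin n → ℝ → EuclideanSpace ℝ (Fin m))
    (fA fB f : Fin n → ℝ → EuclideanSpace ℝ (Fin m))
    (rA0 rB0 r0 : Fin n → EuclideanSpace ℝ (Fin m))
    (a : Fin n → Fin n → ℝ) (κ : ℝ) (hκ : 0 < κ)
    (p l : Fin n) (hpl : p ≠ l) (hneigh : a p l = 1 ∧ a l p = 1)
    -- original decomposed dynamics
    (hdynA : ∀ i t, HasDerivAt (xA i)
      (fA i t + κ • ∑ j, a i j • (xA j t - xA i t) + κ • (xB i t - xA i t)) t)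
    (hdynB : ∀ i t, HasDerivAt (xB i) (fB i t + κ • (xA i t - xB i t)) t)
    (hinitA : ∀ i, xA i 0 = rA0 i) (hinitB : ∀ i, xB i 0 = rB0 i)
    (hdecomp0 : ∀ i, rA0 i + rB0 i = (2:ℝ) • r0 i)
    (hdecompf : ∀ i t, fA i t + fB i t = (2:ℝ) • f i t)
    -- original and alternative references at agent p
    (rp rbarp : ℝ → EuclideanSpace ℝ (Fin m))
    (fbarp : ℝ → EuclideanSpace ℝ (Fin m))
    (hrp0 : rp 0 = r0 p)
    (hrp : ∀ t, HasDerivAt rp (f p t) t)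
    (hrbarp : ∀ t, HasDerivAt rbarp (fbarp t) t)
    -- modified data
    (fbarl : ℝ → EuclideanSpace ℝ (Fin m))
    (hfbarl : ∀ t, fbarl t = f l t + f p t - fbarp t)
    (rbarl0 : EuclideanSpace ℝ (Fin m))
    (hrbarl0 : rbarl0 = r0 l + rp 0 - rbarp 0)
    (rbarA0 rbarB0 : Fin n → EuclideanSpace ℝ (Fin m))
    (hrbarA0 : ∀ i, rbarA0 i = rA0 i)
    (hrbarB0 : ∀ i, rbarB0 i =
      if i = p then (2:ℝ) • rbarp 0 - rA0 p
      else if i = l then (2:ℝ) • rbarl0 - rA0 l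
      else rB0 i)
    (fbarA fbarB : Fin n → ℝ → EuclideanSpace ℝ (Fin m))
    (hfbarA : ∀ i t, fbarA i t =
      if i = p then fA p t + (2 * κ) • (rp t - rbarp t)
      else if i = l then fA l t + (2 * κ) • (rbarp t - rp t)
      else fA i t)
    (hfbarB : ∀ i t, fbarB i t =
      if i = p then (2:ℝ) • fbarp t - fbarA p t
      else if i = l then (2:ℝ) • fbarl t - fbarA l t
      else fB i t)
    -- candidate barred trajectories
    (xbarA xbarB : Fin n → ℝ → EuclideanSpace ℝ (Fin m))
    (hxbarA : ∀ i t, xbarA i t = xA i t)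
    (hxbarB : ∀ i t, xbarB i t =
      if i = p then xB p t + (2:ℝ) • (rbarp t - rp t)
      else if i = l then xB l t + (2:ℝ) • (rp t - rbarp t)
      else xB i t) :
    (∀ i t, HasDerivAt (xbarA i)
      (fbarA i t + κ • ∑ j, a i j • (xbarA j t - xbarA i t)
        + κ • (xbarB i t - xbarA i t)) t) ∧
    (∀ i t, HasDerivAt (xbarB i) (fbarB i t + κ • (xbarA i t - xbarB i t)) t) ∧
    (∀ i, xbarA i 0 = rbarA0 i) ∧
    (∀ i, xbarB i 0 = rbarB0 i) ∧
    (∀ i t, xbarA i t = xA i t) := by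
  refine ⟨?_, ?_, ?_, ?_, hxbarA⟩
  · intro i t
    rw [show xbarA i = xA i from funext (hxbarA i)]
    convert hdynA i t using 1
    have hsum : (∑ j, a i j • (xbarA j t - xA i t))
        = ∑ j, a i j • (xA j t - xA i t) :=
      Finset.sum_congr rfl fun j _ => by rw [hxbarA]
    rw [hsum, hfbarA, hxbarB]
    by_cases hip : i = p
    · rw [if_pos hip, if_pos hip, hip]
      module
    · rw [if_neg hip, if_neg hip]
      by_cases hil : i = l
      · rw [if_pos hil, if_pos hil, hil]
        module
      · rw [if_neg hil, if_neg hil]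
  · intro i t
    by_cases hip : i = p
    · have key : xbarB i = fun s => xB p s + (2:ℝ) • (rbarp s - rp s) :=
        funext fun s => by rw [hxbarB i s, if_pos hip]
      rw [key]
      have hd : HasDerivAt (fun s => xB p s + (2:ℝ) • (rbarp s - rp s))
          ((fB p t + κ • (xA p t - xB p t)) + (2:ℝ) • (fbarp t - f p t)) t :=
        (hdynB p t).add (((hrbarp t).sub (hrp t)).const_smul (2:ℝ))
      convert hd using 1
      have hfB : fB p t = (2:ℝ) • f p t - fA p t := eq_sub_of_add_eq' (hdecompf p t)
      beta_reduce
      rw [hfbarB i t, if_pos hip, hfbarA p t, if_pos rfl, hxbarA i t, hip, hfB]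
      module
    · by_cases hil : i = l
      · have key : xbarB i = fun s => xB l s + (2:ℝ) • (rp s - rbarp s) :=
          funext fun s => by rw [hxbarB i s, if_neg hip, if_pos hil]
        rw [key]
        have hd : HasDerivAt (fun s => xB l s + (2:ℝ) • (rp s - rbarp s))
            ((fB l t + κ • (xA l t - xB l t)) + (2:ℝ) • (f p t - fbarp t)) t :=
          (hdynB l t).add (((hrp t).sub (hrbarp t)).const_smul (2:ℝ))
        convert hd using 1
        have hfB : fB l t = (2:ℝ) • f l t - fA l t := eq_sub_of_add_eq' (hdecompf l t)
        have hlp : ¬ l = p := fun h => hpl h.symm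
        beta_reduce
        rw [hfbarB i t, if_neg hip, if_pos hil, hfbarl t, hfbarA l t,
          if_neg hlp, if_pos rfl, hxbarA i t, hil, hfB]
        module
      · have key : xbarB i = xB i :=
          funext fun s => by rw [hxbarB i s, if_neg hip, if_neg hil]
        rw [key]
        convert hdynB i t using 1
        rw [hfbarB i t, if_neg hip, if_neg hil, hxbarA i t]
  · intro i
    rw [hxbarA, hrbarA0, hinitA]
  · intro i
    rw [hxbarB, hrbarB0]
    by_cases hip : i = p
    · rw [if_pos hip, if_pos hip, hinitB,
        show rB0 p = (2:ℝ) • r0 p - rA0 p from eq_sub_of_add_eq' (hdecomp0 p), hrp0]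
      module
    · rw [if_neg hip, if_neg hip]
      by_cases hil : i = l
      · rw [if_pos hil, if_pos hil, hinitB, hrbarl0, hrp0,
          show rB0 l = (2:ℝ) • r0 l - rA0 l from eq_sub_of_add_eq' (hdecomp0 l)]
        module
      · rw [if_neg hil, if_neg hil, hinitB]
end

section
/- Under the closed-loop error dynamics ė_x = −γ₁ tanh(e_x) + ω e_y, ė_y = −ω e_x + sin(e_θ) v_d, and the Lyapunov function V = (γ₄/2)(e_x² + e_y²) + (1/2)ē_θ², if ω is given by the control law (23) and γ₃ > sup_t |θ̇_d(t)|, then V̇(t) ≤ −γ₁γ₄ e_x tanh(e_x) − γ₂ ē_θ tanh(ē_θ) + γ₄ |e_y| |v_d sin(ρ)| ≤ √(2γ₄ V(t)) · |v_d(t) sin(ρ(t))|. -/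
set_option maxHeartbeats 1000000

lemma mul_tanh_nonneg (x : ℝ) : 0 ≤ x * Real.tanh x := by
  rcases lt_trichotomy x 0 with h | h | h
  · have ht : Real.tanh x < 0 := by
      rw [Real.tanh_eq_sinh_div_cosh]
      exact div_neg_of_neg_of_pos (Real.sinh_neg_iff.2 h) (Real.cosh_pos x)
    exact le_of_lt (mul_pos_of_neg_of_neg h ht)
  · simp [h]
  · have ht : 0 < Real.tanh x := by
      rw [Real.tanh_eq_sinh_div_cosh]
      exact div_pos (Real.sinh_pos_iff.2 h) (Real.cosh_pos x)
    exact le_of_lt (mul_pos h ht)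

lemma mul_sign_eq_abs (x : ℝ) : x * Real.sign x = |x| := by
  rcases lt_trichotomy x 0 with h | h | h
  · rw [Real.sign_of_neg h, abs_of_neg h]; ring
  · simp [h]
  · rw [Real.sign_of_pos h, abs_of_pos h]; ring

theorem stmt14 (ex ey ebarθ eθ ρ ρ' θd' vd ω V V' : ℝ → ℝ)
    (γ₁ γ₂ γ₃ γ₄ : ℝ) (hγ₁ : 0 < γ₁) (hγ₂ : 0 < γ₂) (hγ₃ : 0 < γ₃) (hγ₄ : 0 < γ₄)
    (heθ : ∀ t, eθ t = ebarθ t + ρ t)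
    (hω : ∀ t, ω t = -γ₂ * Real.tanh (ebarθ t) + ρ' t - γ₃ * Real.sign (ebarθ t)
      - γ₄ * ((Real.sin (eθ t) - Real.sin (ρ t)) / ebarθ t) * vd t * ey t)
    (hex : ∀ t, HasDerivAt ex (-γ₁ * Real.tanh (ex t) + ω t * ey t) t)
    (hey : ∀ t, HasDerivAt ey (-(ω t) * ex t + Real.sin (eθ t) * vd t) t)
    (hebarθ : ∀ t, HasDerivAt ebarθ
      (-γ₂ * Real.tanh (ebarθ t) - θd' t - γ₃ * Real.sign (ebarθ t)
        - γ₄ * ((Real.sin (eθ t) - Real.sin (ρ t)) / ebarθ t) * vd t * ey t) t)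
    (hγ₃big : ∀ t, |θd' t| < γ₃)
    (hV : ∀ t, V t = (γ₄ / 2) * ((ex t) ^ 2 + (ey t) ^ 2) + (1 / 2) * (ebarθ t) ^ 2)
    (hVderiv : ∀ t, HasDerivAt V (V' t) t) :
    ∀ t, V' t ≤ -γ₁ * γ₄ * ex t * Real.tanh (ex t) - γ₂ * ebarθ t * Real.tanh (ebarθ t)
        + γ₄ * |ey t| * |vd t * Real.sin (ρ t)| ∧
      -γ₁ * γ₄ * ex t * Real.tanh (ex t) - γ₂ * ebarθ t * Real.tanh (ebarθ t)
        + γ₄ * |ey t| * |vd t * Real.sin (ρ t)|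
        ≤ Real.sqrt (2 * γ₄ * V t) * |vd t * Real.sin (ρ t)| := by
  intro t
  have hVfun : V = fun s => (γ₄ / 2) * ((ex s) ^ 2 + (ey s) ^ 2)
      + (1 / 2) * (ebarθ s) ^ 2 := funext hV
  set ex' := -γ₁ * Real.tanh (ex t) + ω t * ey t with hex'
  set ey' := -(ω t) * ex t + Real.sin (eθ t) * vd t with hey'
  set eb' := -γ₂ * Real.tanh (ebarθ t) - θd' t - γ₃ * Real.sign (ebarθ t)
      - γ₄ * ((Real.sin (eθ t) - Real.sin (ρ t)) / ebarθ t) * vd t * ey t with heb'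
  have hD : HasDerivAt V ((γ₄ / 2) * (2 * ex t ^ 1 * ex' + 2 * ey t ^ 1 * ey')
      + (1 / 2) * (2 * ebarθ t ^ 1 * eb')) t := by
    rw [hVfun]
    exact ((((hex t).pow 2).add ((hey t).pow 2)).const_mul _).add
      (((hebarθ t).pow 2).const_mul _)
  have hVeq : V' t = (γ₄ / 2) * (2 * ex t ^ 1 * ex' + 2 * ey t ^ 1 * ey')
      + (1 / 2) * (2 * ebarθ t ^ 1 * eb') := (hVderiv t).unique hD
  -- simplify the division term
  have hdiv : ebarθ t * ((Real.sin (eθ t) - Real.sin (ρ t)) / ebarθ t)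
      = Real.sin (eθ t) - Real.sin (ρ t) := by
    rcases eq_or_ne (ebarθ t) 0 with h | h
    · rw [h, heθ t, h, zero_add]; simp
    · field_simp
  have hVval : V' t = -γ₁ * γ₄ * ex t * Real.tanh (ex t)
      - γ₂ * ebarθ t * Real.tanh (ebarθ t)
      - ebarθ t * θd' t - γ₃ * |ebarθ t| + γ₄ * ey t * (vd t * Real.sin (ρ t)) := by
    rw [hVeq, hex', hey', heb']
    rw [← mul_sign_eq_abs]
    have : ebarθ t * (γ₄ * ((Real.sin (eθ t) - Real.sin (ρ t)) / ebarθ t) * vd t * ey t)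
        = γ₄ * (Real.sin (eθ t) - Real.sin (ρ t)) * vd t * ey t := by
      rw [show ebarθ t * (γ₄ * ((Real.sin (eθ t) - Real.sin (ρ t)) / ebarθ t) * vd t * ey t)
          = (ebarθ t * ((Real.sin (eθ t) - Real.sin (ρ t)) / ebarθ t)) * (γ₄ * vd t * ey t)
          by ring, hdiv]
      ring
    nlinarith [this]
  have habs : |ebarθ t| * |θd' t| ≤ |ebarθ t| * γ₃ :=
    mul_le_mul_of_nonneg_left (hγ₃big t).le (abs_nonneg _)
  have h1 : V' t ≤ -γ₁ * γ₄ * ex t * Real.tanh (ex t)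
      - γ₂ * ebarθ t * Real.tanh (ebarθ t) + γ₄ * |ey t| * |vd t * Real.sin (ρ t)| := by
    rw [hVval]
    have h2 : -(ebarθ t * θd' t) ≤ |ebarθ t| * |θd' t| := by
      rw [← abs_mul]; exact neg_le_abs _
    have h3 : γ₄ * ey t * (vd t * Real.sin (ρ t)) ≤ γ₄ * |ey t| * |vd t * Real.sin (ρ t)| := by
      have := le_abs_self (ey t * (vd t * Real.sin (ρ t)))
      rw [abs_mul] at this
      nlinarith [this]
    nlinarith [h2, h3, habs]
  refine ⟨h1, ?_⟩
  have hnn : 0 ≤ |vd t * Real.sin (ρ t)| := abs_nonneg _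
  have key : γ₄ * |ey t| ≤ Real.sqrt (2 * γ₄ * V t) := by
    have h2V : 2 * γ₄ * V t = γ₄ ^ 2 * ex t ^ 2 + γ₄ ^ 2 * ey t ^ 2 + γ₄ * ebarθ t ^ 2 := by
      rw [hV t]; ring
    have : (γ₄ * |ey t|) ^ 2 ≤ 2 * γ₄ * V t := by
      rw [h2V, mul_pow, sq_abs]
      nlinarith [sq_nonneg (ex t), sq_nonneg (ebarθ t), sq_nonneg γ₄]
    calc γ₄ * |ey t| = Real.sqrt ((γ₄ * |ey t|) ^ 2) := by
          rw [Real.sqrt_sq (by positivity)]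
      _ ≤ Real.sqrt (2 * γ₄ * V t) := Real.sqrt_le_sqrt this
  have ht1 := mul_tanh_nonneg (ex t)
  have ht2 := mul_tanh_nonneg (ebarθ t)
  linarith [mul_le_mul_of_nonneg_right key hnn,
    mul_nonneg (mul_nonneg hγ₁.le hγ₄.le) ht1, mul_nonneg hγ₂.le ht2]
end
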